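/- For every integer n ≥ 1: Σ_{k=0}^n C(2n, 2k) · (2k)! · c_{2k} = 0, where c_{2k} denotes the coefficient of u^{2k} in the formal power series (u/sinh u)^{2n+1}. (Equivalently, the sum rule Σ_{k=0}^n 2^{k−n} (n!/k!) x_k = 0 holds for the Scasimir coefficients x_k = 2^{−k} k! C(2n,2k) (2k)! c_{2k}.) -/

import Mathlib

open scoped BigOperators
open Nat

noncomputable section

/-- The formal power series `sinh u = Σ u^{2j+1}/(2j+1)!`. -/
def sinhS : PowerSeries ℚ := PowerSeries.mk fun m => if m % 2 = 1 then (1:ℚ)/(m)! else 0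

/-- The formal power series `h = sinh(u)/u = Σ u^{2j}/(2j+1)!` (constant term 1, invertible). -/
def hS : PowerSeries ℚ := PowerSeries.mk fun m => if m % 2 = 0 then (1:ℚ)/(m+1)! else 0

/-- `c_m`, the coefficient of `u^m` in `(u/sinh u)^{2n+1} = (h⁻¹)^{2n+1}`. -/
def ccoef (n m : ℕ) : ℚ := PowerSeries.coeff m ((hS⁻¹)^(2*n+1))

/-- `y_k = (2k+2)! c_{2k} / (4^k (2n+1))`. -/
def ycoef (n k : ℕ) : ℚ := (((2*k+2))! : ℚ) * ccoef n (2*k) / (4^k * (2*(n:ℚ)+1))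

/-!
With `g = u / sinh u`, the sum equals `(2n)!` times the coefficient of `u^{2n}` in
`g^{2n+1} cosh u`. Since `u h' = cosh u - h` for `h = sinh u / u`, the Euler operator `u d/du`
acts on powers of `g` by `u (g^m)' = m (g^m - g^{m+1} cosh u)`. The Euler operator multiplies the
coefficient of `u^m` by `m`, so comparing coefficients of `u^m` leaves
`m [u^m] (g^{m+1} cosh u) = 0`.
-/

open PowerSeries Finset

theorem Finset.sum_range_two_mul_add_one_of_odd {M : Type*} [AddCommMonoid M] (F : ℕ → M)
    (n : ℕ) (hF : ∀ k < n, F (2 * k + 1) = 0) :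
    ∑ i ∈ range (2 * n + 1), F i = ∑ k ∈ range (n + 1), F (2 * k) := by
  induction n with
  | zero => simp
  | succ n ih =>
    rw [sum_range_succ _ (2 * (n + 1)), show 2 * (n + 1) = 2 * n + 1 + 1 by ring, sum_range_succ,
      ih fun k hk => hF k (by omega), hF n (by omega), add_zero, sum_range_succ _ (n + 1)]
    rfl

theorem PowerSeries.coeff_X_mul_derivative {R : Type*} [CommSemiring R] (f : R⟦X⟧) (m : ℕ) :
    coeff m (X * d⁄dX R f) = m * coeff m f := by
  cases m with
  | zero => simp
  | succ m => rw [coeff_succ_X_mul, coeff_derivative, mul_comm]; push_cast; rfl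

def coshS : ℚ⟦X⟧ := mk fun m => if m % 2 = 0 then (1 : ℚ) / m ! else 0

theorem hS_mul_inv : hS * hS⁻¹ = 1 :=
  PowerSeries.mul_inv_cancel _ (by simp [hS])

theorem X_mul_derivative_hS : X * d⁄dX ℚ hS = coshS - hS := by
  ext m
  cases m with
  | zero => simp [hS, coshS]
  | succ m =>
    rw [coeff_succ_X_mul, coeff_derivative]
    simp only [hS, coshS, map_sub, coeff_mk]
    rcases Nat.mod_two_eq_zero_or_one (m + 1) with heven | hodd
    · have hfact : ((m + 1 + 1)! : ℚ) = (m + 2) * (m + 1)! := by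
        rw [Nat.factorial_succ]; push_cast; ring
      simp only [heven, if_true, hfact]
      field_simp
      ring
    · simp [hodd]

theorem X_mul_derivative_inv_hS_pow (m : ℕ) :
    X * d⁄dX ℚ (hS⁻¹ ^ m) = (m : ℚ⟦X⟧) * (hS⁻¹ ^ m - hS⁻¹ ^ (m + 1) * coshS) := by
  cases m with
  | zero => simp
  | succ m =>
    rw [derivative_pow, derivative_inv', Nat.add_sub_cancel]
    linear_combination (-((m + 1 : ℕ) : ℚ⟦X⟧) * hS⁻¹ ^ (m + 2)) * X_mul_derivative_hS +
      ((m + 1 : ℕ) : ℚ⟦X⟧) * hS⁻¹ ^ (m + 1) * hS_mul_inv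

theorem coeff_inv_hS_pow_succ_mul_coshS {m : ℕ} (hm : m ≠ 0) :
    coeff m (hS⁻¹ ^ (m + 1) * coshS) = 0 := by
  have h := congrArg (coeff m) (X_mul_derivative_inv_hS_pow m)
  rw [coeff_X_mul_derivative, ← map_natCast (C (R := ℚ)), coeff_C_mul, map_sub] at h
  have hmul : (m : ℚ) * coeff m (hS⁻¹ ^ (m + 1) * coshS) = 0 := by linear_combination h
  exact (mul_eq_zero.mp hmul).resolve_left (Nat.cast_ne_zero.mpr hm)

theorem coeff_two_mul_mul_coshS (f : ℚ⟦X⟧) (n : ℕ) :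
    coeff (2 * n) (f * coshS) = ∑ k ∈ range (n + 1), coeff (2 * k) f / (2 * n - 2 * k)! := by
  have hodd : ∀ k < n, coeff (2 * k + 1) f * coeff (2 * n - (2 * k + 1)) coshS = 0 := by
    intro k hk
    have : (2 * n - (2 * k + 1)) % 2 = 1 := by omega
    simp [coshS, this]
  rw [coeff_mul, Nat.sum_antidiagonal_eq_sum_range_succ_mk,
    sum_range_two_mul_add_one_of_odd _ n hodd]
  refine sum_congr rfl fun k hk => ?_
  have : (2 * n - 2 * k) % 2 = 0 := by omega
  simp [coshS, this, div_eq_mul_inv]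

/-- The sum rule `Σ_{k=0}^n C(2n,2k) (2k)! c_{2k} = 0`, equivalently
`Σ_{k=0}^n 2^{k−n} (n!/k!) x_k = 0` for the Scasimir coefficients
`x_k = 2^{−k} k! C(2n,2k) (2k)! c_{2k}`. -/
theorem stmt13 (n : ℕ) (hn : 1 ≤ n) :
    ∑ k ∈ Finset.range (n+1),
      (Nat.choose (2*n) (2*k) : ℚ) * (((2*k))! : ℚ) * ccoef n (2*k) = 0 := by
  calc _ = (2 * n)! * ∑ k ∈ range (n + 1), ccoef n (2 * k) / (2 * n - 2 * k)! := by
        rw [mul_sum]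
        refine sum_congr rfl fun k hk => ?_
        have hkn : 2 * k ≤ 2 * n := Nat.mul_le_mul_left 2 (mem_range_succ_iff.mp hk)
        rw [Nat.cast_choose ℚ hkn]
        field_simp
    _ = (2 * n)! * coeff (2 * n) (hS⁻¹ ^ (2 * n + 1) * coshS) := by
        rw [coeff_two_mul_mul_coshS]; rfl
    _ = 0 := by rw [coeff_inv_hS_pow_succ_mul_coshS (by omega), mul_zero]
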